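/- Let T be a finite AND/OR tree with root s, edge costs c, heuristic h at non-terminal leaves, and cost function p computed with Ψ = sum. Define the cost of a solution base B rooted at s as the sum of c(n, n') over all edges (n, n') of B plus the sum of h over all non-terminal leaves of B, with the cost being ∞ if B contains an unsolvable terminal leaf (solvable terminal leaves contribute 0). Then p(s) equals the minimum of this cost over all solution bases rooted at s, and this minimum is attained by the greedy solution base obtained by including, at each internal OR node, a child minimizing c + p (and all children at each AND node). Hence the partial solution graph traced by AO* by following minimum-cost children achieves the recursive cost estimate p(s). -/

import Mathlib

open scoped ENNReal

/-- A node of an AND/OR graph is labeled either OR or AND. -/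
inductive NodeKind : Type
  | orN
  | andN
deriving DecidableEq

/-- A leaf is a solvable terminal, an unsolvable terminal, or a non-terminal leaf. -/
inductive LeafKind : Type
  | solv
  | unsolv
  | nonterm
deriving DecidableEq

/-- The combination rule `Ψ ∈ {sum, max}`. -/
inductive CombRule : Type
  | sum
  | max

/-- A finite acyclic AND/OR graph on a node type `V`: a successor function
(`succ n = ∅` means `n` is a leaf), an OR/AND label on each node, a
terminal/non-terminal designation for leaves, edge costs in `ℝ≥0∞`, and
well-foundedness of the successor relation (no directed cycles). -/
structure AOGraph (V : Type) where
  succ : V → Finset V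
  kind : V → NodeKind
  leafKind : V → LeafKind
  cost : V → V → ℝ≥0∞
  acyclic : WellFounded (fun a b : V => a ∈ succ b)

/-- Combining the values of the successors by `Ψ`. -/
noncomputable def comb {V : Type} (Ψ : CombRule) (s : Finset V) (f : V → ℝ≥0∞) : ℝ≥0∞ :=
  match Ψ with
  | .sum => ∑ x ∈ s, f x
  | .max => s.sup f

/-- `p` is the proof-cost function of `G` with heuristic `h` and rule `Ψ`. -/
def IsProofCost {V : Type} (G : AOGraph V) (h : V → ℝ≥0∞) (Ψ : CombRule)
    (p : V → ℝ≥0∞) : Prop :=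
  ∀ n : V,
    (G.succ n = ∅ →
      p n = (match G.leafKind n with
             | .solv => 0
             | .unsolv => ⊤
             | .nonterm => h n)) ∧
    (G.succ n ≠ ∅ →
      p n = (match G.kind n with
             | .orN => (G.succ n).inf (fun m => G.cost n m + p m)
             | .andN => comb Ψ (G.succ n) (fun m => G.cost n m + p m)))

/-- `d` is the disproof-cost function of `G` with heuristic `h̄` and rule `Ψ`. -/
def IsDisproofCost {V : Type} (G : AOGraph V) (hb : V → ℝ≥0∞) (Ψ : CombRule)
    (d : V → ℝ≥0∞) : Prop :=
  ∀ n : V,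
    (G.succ n = ∅ →
      d n = (match G.leafKind n with
             | .solv => ⊤
             | .unsolv => 0
             | .nonterm => hb n)) ∧
    (G.succ n ≠ ∅ →
      d n = (match G.kind n with
             | .orN => comb Ψ (G.succ n) (fun m => G.cost n m + d m)
             | .andN => (G.succ n).inf (fun m => G.cost n m + d m)))

/-- `B` is (the node set of) a solution base rooted at `s`: a subtree
containing `s` (every other element has a parent in `B`), exactly one child of
each of its internal OR nodes, and all children of each of its internal AND
nodes. -/
def IsSolutionBase {V : Type} (G : AOGraph V) (s : V) (B : Finset V) : Prop :=
  s ∈ B ∧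
  (∀ y ∈ B, y ≠ s → ∃ z ∈ B, y ∈ G.succ z) ∧
  (∀ y ∈ B, G.succ y ≠ ∅ → G.kind y = .orN → ∃! z : V, z ∈ G.succ y ∧ z ∈ B) ∧
  (∀ y ∈ B, G.succ y ≠ ∅ → G.kind y = .andN → ∀ z ∈ G.succ y, z ∈ B)

open Classical in
/-- The cost of a solution base `B`: `∞` if `B` contains an unsolvable
terminal leaf; otherwise the sum of the edge costs `c(n, n')` over the edges
of `B` plus the sum of `h` over the non-terminal leaves of `B` (solvable
terminal leaves contribute `0`). -/
noncomputable def baseCost {V : Type} [Fintype V] [DecidableEq V]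
    (G : AOGraph V) (h : V → ℝ≥0∞) (B : Finset V) : ℝ≥0∞ :=
  if ∃ y ∈ B, G.succ y = ∅ ∧ G.leafKind y = .unsolv then ⊤
  else (∑ n ∈ B, ∑ m ∈ G.succ n ∩ B, G.cost n m) +
       ∑ y ∈ B, (if G.succ y = ∅ ∧ G.leafKind y = .nonterm then h y else 0)

/-- A greedy solution base: a solution base in which the child included at
each internal OR node minimizes `c + p` among the successors. -/
def IsGreedySolutionBase {V : Type} (G : AOGraph V) (p : V → ℝ≥0∞) (s : V)
    (B : Finset V) : Prop :=
  IsSolutionBase G s B ∧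
  ∀ y ∈ B, G.succ y ≠ ∅ → G.kind y = .orN →
    ∀ z ∈ G.succ y, z ∈ B → ∀ w ∈ G.succ y, G.cost y z + p z ≤ G.cost y w + p w

/-!
In a tree, a solution base `B` at an internal node `s` is `s` together with the disjoint pieces
of `B` lying below the children of `s` that `B` contains, each a solution base at that child. So
the cost of `B` is the sum, over those children `m`, of `c(s, m)` plus the cost of the piece below
`m`: exactly the recursion defining `p` at an AND node, and one term of the minimum at an OR node.
Well-founded induction along the child relation then gives `p s ≤ cost B` for every solution
base, with equality when every OR choice minimizes `c + p`. Such a greedy base exists: fix a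
minimizing child at each OR node and take the nodes reachable from `s` along the chosen edges.
-/

open Relation

namespace AOGraph

variable {V : Type} (G : AOGraph V)

abbrev IsChild (a b : V) : Prop := a ∈ G.succ b

def IsTree : Prop := ∀ x n n' : V, x ∈ G.succ n → x ∈ G.succ n' → n = n'

def leafCost (h : V → ℝ≥0∞) (n : V) : ℝ≥0∞ :=
  match G.leafKind n with
  | .solv => 0
  | .unsolv => ⊤
  | .nonterm => h n

open Classical in
noncomputable def subBase (B : Finset V) (m : V) : Finset V :=
  B.filter (fun y => ReflTransGen G.IsChild y m)

variable {G} {B : Finset V}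

theorem not_transGen_self (a : V) : ¬ TransGen G.IsChild a a :=
  G.acyclic.transGen.irrefl.irrefl a

theorem wellFounded_parent [Finite V] : WellFounded (fun b a : V => a ∈ G.succ b) := by
  have : IsTrans V (fun a b => TransGen G.IsChild b a) := ⟨fun _ _ _ h₁ h₂ => h₂.trans h₁⟩
  have : Std.Irrefl (fun a b : V => TransGen G.IsChild b a) := ⟨not_transGen_self⟩
  exact Subrelation.wf (fun {_ _} h => TransGen.single (r := G.IsChild) h)
    (Finite.wellFounded_of_trans_of_irrefl _)

theorem IsTree.reflTransGen_total (hT : G.IsTree) {y a b : V}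
    (hya : ReflTransGen G.IsChild y a) (hyb : ReflTransGen G.IsChild y b) :
    ReflTransGen G.IsChild a b ∨ ReflTransGen G.IsChild b a := by
  induction hya using ReflTransGen.head_induction_on generalizing b with
  | refl => exact Or.inl hyb
  | head hyc hca ih =>
    rcases hyb.cases_head with rfl | ⟨w, hyw, hwb⟩
    · exact Or.inr (ReflTransGen.head hyc hca)
    · exact ih (hT _ _ _ hyc hyw ▸ hwb)

theorem IsTree.eq_of_reflTransGen (hT : G.IsTree) {s m m' y : V}
    (hm : m ∈ G.succ s) (hm' : m' ∈ G.succ s)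
    (hy : ReflTransGen G.IsChild y m) (hy' : ReflTransGen G.IsChild y m') : m = m' := by
  have siblings : ∀ {a b}, a ∈ G.succ s → b ∈ G.succ s →
      ReflTransGen G.IsChild a b → a = b := by
    intro a b ha hb hab
    rcases hab.cases_head with rfl | ⟨w, haw, hwb⟩
    · rfl
    · cases hT _ _ _ haw ha
      exact (not_transGen_self _ (TransGen.tail' hwb hb)).elim
  rcases hT.reflTransGen_total hy hy' with h | h
  · exact siblings hm hm' h
  · exact (siblings hm' hm h).symm

theorem mem_subBase {m y : V} :
    y ∈ G.subBase B m ↔ y ∈ B ∧ ReflTransGen G.IsChild y m := by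
  simp [subBase]

theorem subBase_subset (m : V) : G.subBase B m ⊆ B := fun _ hy => (mem_subBase.1 hy).1

theorem succ_inter_subBase [DecidableEq V] {m n : V} (hn : n ∈ G.subBase B m) :
    G.succ n ∩ G.subBase B m = G.succ n ∩ B := by
  ext z
  simp only [Finset.mem_inter, mem_subBase]
  exact ⟨fun h => ⟨h.1, h.2.1⟩, fun h => ⟨h.1, h.2, .head h.1 (mem_subBase.1 hn).2⟩⟩

end AOGraph

open AOGraph

variable {V : Type} {G : AOGraph V} {s : V} {B : Finset V}

namespace IsSolutionBase

theorem eq_or_exists_reflTransGen [Finite V] (hB : IsSolutionBase G s B) {y : V}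
    (hy : y ∈ B) : y = s ∨ ∃ m ∈ G.succ s, m ∈ B ∧ ReflTransGen G.IsChild y m := by
  induction y using (wellFounded_parent (G := G)).induction with
  | _ y ih =>
    by_cases hys : y = s
    · exact Or.inl hys
    obtain ⟨z, hzB, hyz⟩ := hB.2.1 y hy hys
    by_cases hzs : z = s
    · exact Or.inr ⟨y, hzs ▸ hyz, hy, .refl⟩
    rcases ih z hyz hzB with rfl | ⟨m, hm, hmB, hzm⟩
    · exact (hzs rfl).elim
    · exact Or.inr ⟨m, hm, hmB, .head hyz hzm⟩

theorem eq_singleton_of_succ_eq_empty [Finite V] (hB : IsSolutionBase G s B)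
    (hs : G.succ s = ∅) : B = {s} := by
  refine Finset.eq_singleton_iff_unique_mem.2 ⟨hB.1, fun y hy => ?_⟩
  rcases hB.eq_or_exists_reflTransGen hy with rfl | ⟨m, hm, -⟩
  · rfl
  · simp [hs] at hm

theorem exists_succ_inter_eq_singleton [DecidableEq V] (hB : IsSolutionBase G s B)
    (hs : G.succ s ≠ ∅) (hk : G.kind s = .orN) : ∃ m, G.succ s ∩ B = {m} := by
  obtain ⟨m, hm, hmu⟩ := hB.2.2.1 s hB.1 hs hk
  exact ⟨m, Finset.eq_singleton_iff_unique_mem.2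
    ⟨Finset.mem_inter.2 hm, fun w hw => hmu w (Finset.mem_inter.1 hw)⟩⟩

theorem succ_subset (hB : IsSolutionBase G s B) (hs : G.succ s ≠ ∅) (hk : G.kind s = .andN) :
    G.succ s ⊆ B :=
  hB.2.2.2 s hB.1 hs hk

theorem subBase (hT : G.IsTree) (hB : IsSolutionBase G s B) {m : V}
    (hm : m ∈ G.succ s) (hmB : m ∈ B) : IsSolutionBase G m (G.subBase B m) := by
  refine ⟨mem_subBase.2 ⟨hmB, .refl⟩, fun y hy hym => ?_, fun y hy hne hk => ?_,
    fun y hy hne hk z hz => ?_⟩ <;> obtain ⟨hyB, hyr⟩ := mem_subBase.1 hy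
  · have hys : y ≠ s := by
      rintro rfl
      exact not_transGen_self _ (TransGen.tail' hyr hm)
    obtain ⟨z, hzB, hyz⟩ := hB.2.1 y hyB hys
    rcases hyr.cases_head with rfl | ⟨w, hyw, hwm⟩
    · exact (hym rfl).elim
    · exact ⟨z, mem_subBase.2 ⟨hzB, hT _ _ _ hyw hyz ▸ hwm⟩, hyz⟩
  · obtain ⟨z, ⟨hz, hzB⟩, hzu⟩ := hB.2.2.1 y hyB hne hk
    exact ⟨z, ⟨hz, mem_subBase.2 ⟨hzB, .head hz hyr⟩⟩,
      fun z' hz' => hzu z' ⟨hz'.1, subBase_subset m hz'.2⟩⟩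
  · exact mem_subBase.2 ⟨hB.2.2.2 y hyB hne hk z hz, .head hz hyr⟩

theorem sum_eq_add_sum_subBase [Finite V] [DecidableEq V] {M : Type*} [AddCommMonoid M]
    (hT : G.IsTree) (hB : IsSolutionBase G s B) (f : V → M) :
    ∑ n ∈ B, f n = f s + ∑ m ∈ G.succ s ∩ B, ∑ n ∈ G.subBase B m, f n := by
  have hcover : B = insert s ((G.succ s ∩ B).biUnion (G.subBase B)) := by
    ext y
    simp only [Finset.mem_insert, Finset.mem_biUnion, Finset.mem_inter, mem_subBase]
    constructor
    · intro hy
      rcases hB.eq_or_exists_reflTransGen hy with rfl | ⟨m, hm, hmB, hym⟩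
      · exact Or.inl rfl
      · exact Or.inr ⟨m, ⟨hm, hmB⟩, hy, hym⟩
    · rintro (rfl | ⟨-, -, hy, -⟩)
      exacts [hB.1, hy]
  have hs : s ∉ (G.succ s ∩ B).biUnion (G.subBase B) := by
    simp only [Finset.mem_biUnion, Finset.mem_inter, mem_subBase, not_exists, not_and]
    exact fun m hm _ hsm => not_transGen_self s (TransGen.tail' hsm hm.1)
  have hdisj : (↑(G.succ s ∩ B) : Set V).PairwiseDisjoint (G.subBase B) := by
    intro m hm m' hm' hne
    refine Finset.disjoint_left.2 fun y hy hy' => hne ?_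
    exact hT.eq_of_reflTransGen (Finset.mem_inter.1 hm).1 (Finset.mem_inter.1 hm').1
      (mem_subBase.1 hy).2 (mem_subBase.1 hy').2
  conv_lhs => rw [hcover]
  rw [Finset.sum_insert hs, Finset.sum_biUnion hdisj]

end IsSolutionBase

namespace IsProofCost

variable {h p : V → ℝ≥0∞} {Ψ : CombRule}

theorem eq_leafCost (hp : IsProofCost G h Ψ p) (hs : G.succ s = ∅) : p s = G.leafCost h s :=
  (hp s).1 hs

theorem eq_inf (hp : IsProofCost G h Ψ p) (hs : G.succ s ≠ ∅) (hk : G.kind s = .orN) :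
    p s = (G.succ s).inf (fun m => G.cost s m + p m) := by
  simpa [hk] using (hp s).2 hs

theorem eq_sum (hp : IsProofCost G h .sum p) (hs : G.succ s ≠ ∅) (hk : G.kind s = .andN) :
    p s = ∑ m ∈ G.succ s, (G.cost s m + p m) := by
  simpa [hk, comb] using (hp s).2 hs

end IsProofCost

section BaseCost

variable [Fintype V] [DecidableEq V] {h p : V → ℝ≥0∞}

/-- An unsolvable leaf contributes `⊤`, which absorbs the whole sum. -/
theorem baseCost_eq_sum (G : AOGraph V) (h : V → ℝ≥0∞) (B : Finset V) :
    baseCost G h B = ∑ n ∈ B,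
      ((∑ m ∈ G.succ n ∩ B, G.cost n m) + if G.succ n = ∅ then G.leafCost h n else 0) := by
  unfold baseCost
  split_ifs with hU
  · obtain ⟨y, hy, hleaf, hk⟩ := hU
    exact (ENNReal.sum_eq_top.2 ⟨y, hy, by simp [hleaf, leafCost, hk]⟩).symm
  · push Not at hU
    rw [Finset.sum_add_distrib]
    congr 1
    refine Finset.sum_congr rfl fun n hn => ?_
    by_cases hleaf : G.succ n = ∅
    · have := hU n hn hleaf
      cases hk : G.leafKind n <;> simp_all [leafCost]
    · simp [hleaf]

theorem baseCost_singleton_of_succ_eq_empty (hs : G.succ s = ∅) :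
    baseCost G h {s} = G.leafCost h s := by
  simp [baseCost_eq_sum, hs]

theorem IsSolutionBase.baseCost_eq_sum_succ (hT : G.IsTree) (hB : IsSolutionBase G s B)
    (hs : G.succ s ≠ ∅) :
    baseCost G h B = ∑ m ∈ G.succ s ∩ B, (G.cost s m + baseCost G h (G.subBase B m)) := by
  rw [baseCost_eq_sum, hB.sum_eq_add_sum_subBase hT, if_neg hs, add_zero,
    ← Finset.sum_add_distrib]
  refine Finset.sum_congr rfl fun m _ => ?_
  rw [baseCost_eq_sum]
  congr 1
  refine Finset.sum_congr rfl fun n hn => ?_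
  rw [succ_inter_subBase hn]

namespace IsProofCost

theorem le_baseCost (hT : G.IsTree) (hp : IsProofCost G h .sum p)
    (hB : IsSolutionBase G s B) : p s ≤ baseCost G h B := by
  induction s using G.acyclic.induction generalizing B with
  | _ s ih =>
    by_cases hs : G.succ s = ∅
    · rw [hB.eq_singleton_of_succ_eq_empty hs, baseCost_singleton_of_succ_eq_empty hs,
        hp.eq_leafCost hs]
    have hsub : ∀ m ∈ G.succ s, m ∈ B →
        G.cost s m + p m ≤ G.cost s m + baseCost G h (G.subBase B m) := by
      intro m hm hmB
      gcongr
      exact ih m hm (hB.subBase hT hm hmB)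
    rw [hB.baseCost_eq_sum_succ hT hs]
    cases hk : G.kind s
    · obtain ⟨m, hm⟩ := hB.exists_succ_inter_eq_singleton hs hk
      obtain ⟨hms, hmB⟩ := Finset.mem_inter.1 (hm ▸ Finset.mem_singleton_self m)
      rw [hp.eq_inf hs hk, hm, Finset.sum_singleton]
      exact (Finset.inf_le hms).trans (hsub m hms hmB)
    · have hsucc := hB.succ_subset hs hk
      rw [hp.eq_sum hs hk, Finset.inter_eq_left.2 hsucc]
      exact Finset.sum_le_sum fun m hm => hsub m hm (hsucc hm)

theorem baseCost_eq (hT : G.IsTree) (hp : IsProofCost G h .sum p)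
    (hB : IsGreedySolutionBase G p s B) : baseCost G h B = p s := by
  induction s using G.acyclic.induction generalizing B with
  | _ s ih =>
    by_cases hs : G.succ s = ∅
    · rw [hB.1.eq_singleton_of_succ_eq_empty hs, baseCost_singleton_of_succ_eq_empty hs,
        hp.eq_leafCost hs]
    have hsub : ∀ m ∈ G.succ s ∩ B, baseCost G h (G.subBase B m) = p m := by
      intro m hm
      obtain ⟨hm, hmB⟩ := Finset.mem_inter.1 hm
      exact ih m hm ⟨hB.1.subBase hT hm hmB, fun y hy hne hk z hz hzB =>
        hB.2 y (subBase_subset m hy) hne hk z hz (subBase_subset m hzB)⟩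
    rw [hB.1.baseCost_eq_sum_succ hT hs, Finset.sum_congr rfl fun m hm => by rw [hsub m hm]]
    cases hk : G.kind s
    · obtain ⟨m, hm⟩ := hB.1.exists_succ_inter_eq_singleton hs hk
      obtain ⟨hms, hmB⟩ := Finset.mem_inter.1 (hm ▸ Finset.mem_singleton_self m)
      rw [hp.eq_inf hs hk, hm, Finset.sum_singleton]
      exact le_antisymm (Finset.le_inf (hB.2 s hB.1.1 hs hk m hms hmB)) (Finset.inf_le hms)
    · rw [hp.eq_sum hs hk, Finset.inter_eq_left.2 (hB.1.succ_subset hs hk)]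

end IsProofCost

end BaseCost

namespace AOGraph

variable [Fintype V] (next : V → V)

def IsGreedyChild (a b : V) : Prop := a ∈ G.succ b ∧ (G.kind b = .orN → a = next b)

open Classical in
noncomputable def greedyBase (s : V) : Finset V :=
  {y | ReflTransGen (G.IsGreedyChild next) y s}

variable {next}

theorem mem_greedyBase {y : V} :
    y ∈ G.greedyBase next s ↔ ReflTransGen (G.IsGreedyChild next) y s := by
  simp [greedyBase]

theorem eq_next_of_mem_greedyBase (hT : G.IsTree) {y z : V} (hy : y ∈ G.greedyBase next s)
    (hk : G.kind y = .orN) (hz : z ∈ G.succ y) (hzB : z ∈ G.greedyBase next s) :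
    z = next y := by
  rcases (mem_greedyBase.1 hzB).cases_head with rfl | ⟨w, hzw, -⟩
  · have hyz : ReflTransGen G.IsChild y z :=
      ReflTransGen.mono (fun _ _ h => h.1) _ _ (mem_greedyBase.1 hy)
    exact (not_transGen_self z (TransGen.head' hz hyz)).elim
  · obtain rfl := hT _ _ _ hzw.1 hz
    exact hzw.2 hk

theorem isSolutionBase_greedyBase (hT : G.IsTree)
    (hnext : ∀ y, G.succ y ≠ ∅ → next y ∈ G.succ y) :
    IsSolutionBase G s (G.greedyBase next s) := by
  refine ⟨mem_greedyBase.2 .refl, fun y hy hys => ?_, fun y hy hne hk => ?_,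
    fun y hy _ hk z hz => ?_⟩
  · obtain ⟨w, hyw, hws⟩ := (mem_greedyBase.1 hy).cases_head.resolve_left hys
    exact ⟨w, mem_greedyBase.2 hws, hyw.1⟩
  · have hnextB : next y ∈ G.greedyBase next s :=
      mem_greedyBase.2 (.head ⟨hnext y hne, fun _ => rfl⟩ (mem_greedyBase.1 hy))
    exact ⟨next y, ⟨hnext y hne, hnextB⟩,
      fun z hz => eq_next_of_mem_greedyBase hT hy hk hz.1 hz.2⟩
  · exact mem_greedyBase.2 (.head ⟨hz, fun h => by simp [hk] at h⟩ (mem_greedyBase.1 hy))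

theorem exists_isGreedySolutionBase (hT : G.IsTree) (p : V → ℝ≥0∞) (s : V) :
    ∃ B, IsGreedySolutionBase G p s B := by
  have hmin : ∀ y, ∃ x, G.succ y ≠ ∅ →
      x ∈ G.succ y ∧ ∀ w ∈ G.succ y, G.cost y x + p x ≤ G.cost y w + p w := by
    intro y
    by_cases hy : G.succ y = ∅
    · exact ⟨y, fun h => (h hy).elim⟩
    · obtain ⟨x, hx⟩ := (G.succ y).exists_min_image (fun x => G.cost y x + p x)
        (Finset.nonempty_iff_ne_empty.2 hy)
      exact ⟨x, fun _ => hx⟩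
  choose next hnext using hmin
  refine ⟨G.greedyBase next s, isSolutionBase_greedyBase hT fun y hy => (hnext y hy).1,
    fun y hy hne hk z hz hzB => ?_⟩
  rw [eq_next_of_mem_greedyBase hT hy hk hz hzB]
  exact (hnext y hne).2

end AOGraph

/-- Let `T` be a finite AND/OR tree (at most one parent per
node) with root `s`, edge costs `c`, heuristic `h` at non-terminal leaves, and
cost function `p` computed with `Ψ = sum`. Then `p s` equals the minimum of
the base cost over all solution bases rooted at `s`, and this minimum is
attained by a greedy solution base (one that includes, at each internal OR
node, a child minimizing `c + p`, and all children at each AND node): the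
partial solution graph traced by AO* following minimum-cost children achieves
the recursive cost estimate `p s`. -/
theorem proof_cost_eq_min_base_cost {V : Type} [Fintype V] [DecidableEq V]
    (G : AOGraph V)
    (htree : ∀ x n n' : V, x ∈ G.succ n → x ∈ G.succ n' → n = n')
    (h : V → ℝ≥0∞) (p : V → ℝ≥0∞)
    (hp : IsProofCost G h .sum p) (s : V) :
    p s = sInf {c : ℝ≥0∞ | ∃ B : Finset V, IsSolutionBase G s B ∧ c = baseCost G h B} ∧
    ∃ B : Finset V, IsGreedySolutionBase G p s B ∧ baseCost G h B = p s := by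
  obtain ⟨B, hB⟩ := exists_isGreedySolutionBase htree p s
  have hcost : baseCost G h B = p s := hp.baseCost_eq htree hB
  refine ⟨le_antisymm (le_sInf ?_) (sInf_le ⟨B, hB.1, hcost.symm⟩), B, hB, hcost⟩
  rintro _ ⟨B', hB', rfl⟩
  exact hp.le_baseCost htree hB'
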